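/- Let μ, σ̄, R, γ > 0 and for integers k ≥ 0 define Λ_k(γ) := (μσ̄/R)·[γ·(h_k(R) + j_k(R)) − j_k(R)·R]. Then lim_{k→∞} Λ_k(γ) = +∞. -/

import Mathlib

/-!
Comparing the power series termwise gives, for `m ≥ 0` and `r > 0`,
`r / (2 (m + 1) e^{r²/4}) ≤ I_{m+1}(r) / I_m(r) ≤ r / (2 (m + 1))`.
The upper bound keeps `j_k(R)` bounded, and the lower bound makes `h_k(R)` grow at least
linearly in `k`. Since `Λ_k(γ) = (μσ̄/R) (γ h_k(R) + (γ - R) j_k(R))`, it tends to `+∞`.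
-/

/-- The modified Bessel function of the first kind of order `m`:
`I_m(r) = ∑ (r/2)^(m+2n) / (n! Γ(m+n+1))`. -/
noncomputable def besselI (m r : ℝ) : ℝ :=
  ∑' n : ℕ, (r / 2) ^ (m + 2 * (n : ℝ)) / ((n.factorial : ℝ) * Real.Gamma (m + (n : ℝ) + 1))

/-- `h_k(R) = ((k²+k)/2 - 1)·I_{k+3/2}(R)/(R·I_{k+1/2}(R))`. -/
noncomputable def hfun (k : ℕ) (R : ℝ) : ℝ :=
  (((k : ℝ) ^ 2 + k) / 2 - 1) * (besselI ((k : ℝ) + 3 / 2) R / (R * besselI ((k : ℝ) + 1 / 2) R))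

/-- `j_k(R) = 1 - 3 I_{3/2}(R)/(R I_{1/2}(R)) - I_{3/2}(R) I_{k+3/2}(R)/(I_{1/2}(R) I_{k+1/2}(R))`. -/
noncomputable def jfun (k : ℕ) (R : ℝ) : ℝ :=
  1 - 3 * besselI (3 / 2) R / (R * besselI (1 / 2) R)
    - besselI (3 / 2) R * besselI ((k : ℝ) + 3 / 2) R
      / (besselI (1 / 2) R * besselI ((k : ℝ) + 1 / 2) R)

/-- The eigenvalue `Λ_k(γ) = (μσ̄/R)·[γ·(h_k(R)+j_k(R)) - j_k(R)·R]`. -/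
noncomputable def Lam (μ σb R γ : ℝ) (k : ℕ) : ℝ :=
  (μ * σb / R) * (γ * (hfun k R + jfun k R) - jfun k R * R)

open Real Filter

theorem Real.Gamma_add_one_le_Gamma_add_natCast_add_one {m : ℝ} (hm : 0 ≤ m) (n : ℕ) :
    Gamma (m + 1) ≤ Gamma (m + n + 1) := by
  induction n with
  | zero => simp
  | succ n ih =>
    have hpos : 0 < m + n + 1 := by positivity
    calc Gamma (m + 1) ≤ Gamma (m + n + 1) := ih
      _ ≤ (m + n + 1) * Gamma (m + n + 1) :=
        le_mul_of_one_le_left (Gamma_pos_of_pos hpos).le (by linarith)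
      _ = Gamma (m + (n + 1 : ℕ) + 1) := by
        rw [← Gamma_add_one hpos.ne']; push_cast; ring_nf

noncomputable def besselTerm (m r : ℝ) (n : ℕ) : ℝ :=
  (r / 2) ^ (m + 2 * (n : ℝ)) / ((n.factorial : ℝ) * Gamma (m + (n : ℝ) + 1))

theorem besselI_eq_tsum (m r : ℝ) : besselI m r = ∑' n, besselTerm m r n := rfl

theorem besselTerm_zero (m r : ℝ) : besselTerm m r 0 = (r / 2) ^ m / Gamma (m + 1) := by
  simp [besselTerm]

section

variable {m r : ℝ}

theorem besselTerm_pos (hm : -1 < m) (hr : 0 < r) (n : ℕ) : 0 < besselTerm m r n := by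
  have : 0 < Gamma (m + n + 1) := Gamma_pos_of_pos (by linarith [n.cast_nonneg (α := ℝ)])
  unfold besselTerm
  positivity

theorem besselTerm_add_one (hm : -1 < m) (hr : 0 < r) (n : ℕ) :
    besselTerm (m + 1) r n = r / (2 * (m + n + 1)) * besselTerm m r n := by
  have hpos : 0 < m + n + 1 := by linarith [n.cast_nonneg (α := ℝ)]
  have hpow : (r / 2) ^ (m + 1 + 2 * (n : ℝ)) = (r / 2) ^ (m + 2 * (n : ℝ)) * (r / 2) := by
    rw [add_right_comm, rpow_add_one (by positivity)]
  have hGamma : Gamma (m + 1 + n + 1) = (m + n + 1) * Gamma (m + n + 1) := by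
    rw [add_right_comm m 1, Gamma_add_one hpos.ne']
  have := Gamma_pos_of_pos hpos
  unfold besselTerm
  rw [hpow, hGamma]
  field_simp

theorem besselTerm_add_one_le (hm : -1 < m) (hr : 0 < r) (n : ℕ) :
    besselTerm (m + 1) r n ≤ r / (2 * (m + 1)) * besselTerm m r n := by
  rw [besselTerm_add_one hm hr]
  gcongr
  · exact (besselTerm_pos hm hr n).le
  · linarith
  · exact le_add_of_nonneg_right n.cast_nonneg

theorem besselTerm_le (hm : 0 ≤ m) (hr : 0 < r) (n : ℕ) :
    besselTerm m r n ≤ (r / 2) ^ m / Gamma (m + 1) * (((r / 2) ^ 2) ^ n / n.factorial) := by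
  have hpow : (r / 2) ^ (m + 2 * (n : ℝ)) = (r / 2) ^ m * ((r / 2) ^ 2) ^ n := by
    rw [rpow_add (by positivity), rpow_mul (by positivity)]
    norm_cast
  have := Gamma_pos_of_pos (by positivity : 0 < m + 1)
  calc besselTerm m r n ≤ (r / 2) ^ m * ((r / 2) ^ 2) ^ n / (n.factorial * Gamma (m + 1)) := by
        unfold besselTerm
        rw [hpow]
        gcongr
        exact Gamma_add_one_le_Gamma_add_natCast_add_one hm n
    _ = _ := by ring

theorem summable_besselTerm (hm : 0 ≤ m) (hr : 0 < r) : Summable (besselTerm m r) :=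
  .of_nonneg_of_le (fun n ↦ (besselTerm_pos (by linarith) hr n).le) (besselTerm_le hm hr)
    ((summable_pow_div_factorial _).mul_left _)

theorem besselI_pos (hm : 0 ≤ m) (hr : 0 < r) : 0 < besselI m r :=
  (summable_besselTerm hm hr).tsum_pos (fun n ↦ (besselTerm_pos (by linarith) hr n).le) 0
    (besselTerm_pos (by linarith) hr 0)

theorem le_besselI (hm : 0 ≤ m) (hr : 0 < r) : (r / 2) ^ m / Gamma (m + 1) ≤ besselI m r := by
  rw [← besselTerm_zero]
  exact (summable_besselTerm hm hr).le_tsum 0 fun n _ ↦ (besselTerm_pos (by linarith) hr n).le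

theorem besselI_le (hm : 0 ≤ m) (hr : 0 < r) :
    besselI m r ≤ (r / 2) ^ m / Gamma (m + 1) * exp ((r / 2) ^ 2) := by
  have hexp : HasSum (fun n ↦ ((r / 2) ^ 2) ^ n / n.factorial) (exp ((r / 2) ^ 2)) :=
    exp_eq_exp_ℝ ▸ NormedSpace.expSeries_div_hasSum_exp _
  exact hasSum_le (besselTerm_le hm hr) (summable_besselTerm hm hr).hasSum (hexp.mul_left _)

theorem besselI_add_one_le (hm : 0 ≤ m) (hr : 0 < r) :
    besselI (m + 1) r ≤ r / (2 * (m + 1)) * besselI m r := by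
  rw [besselI_eq_tsum, besselI_eq_tsum, ← tsum_mul_left]
  exact (summable_besselTerm (by linarith) hr).tsum_le_tsum
    (besselTerm_add_one_le (by linarith) hr) ((summable_besselTerm hm hr).mul_left _)

theorem le_besselI_add_one (hm : 0 ≤ m) (hr : 0 < r) :
    r * besselI m r ≤ 2 * (m + 1) * exp ((r / 2) ^ 2) * besselI (m + 1) r := by
  have hGamma : Gamma (m + 1 + 1) = (m + 1) * Gamma (m + 1) := Gamma_add_one (by positivity)
  have := Gamma_pos_of_pos (by positivity : 0 < m + 1)
  calc r * besselI m r ≤ r * ((r / 2) ^ m / Gamma (m + 1) * exp ((r / 2) ^ 2)) := by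
        gcongr; exact besselI_le hm hr
    _ = 2 * (m + 1) * exp ((r / 2) ^ 2) * ((r / 2) ^ (m + 1) / Gamma (m + 1 + 1)) := by
        rw [hGamma, rpow_add_one (by positivity)]
        field_simp
    _ ≤ 2 * (m + 1) * exp ((r / 2) ^ 2) * besselI (m + 1) r := by
        gcongr; exact le_besselI (by linarith) hr

theorem besselI_add_one_div_le (hm : 0 ≤ m) (hr : 0 < r) :
    besselI (m + 1) r / besselI m r ≤ r / (2 * (m + 1)) :=
  div_le_of_le_mul₀ (besselI_pos hm hr).le (by positivity) (besselI_add_one_le hm hr)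

theorem le_besselI_add_one_div (hm : 0 ≤ m) (hr : 0 < r) :
    1 / (2 * (m + 1) * exp ((r / 2) ^ 2)) ≤ besselI (m + 1) r / (r * besselI m r) := by
  have := besselI_pos hm hr
  rw [div_le_div_iff₀ (by positivity) (by positivity)]
  linarith [le_besselI_add_one hm hr]

end

section

variable {R : ℝ}

theorem le_hfun (hR : 0 < R) {k : ℕ} (hk : 1 ≤ k) :
    ((k : ℝ) - 2) / (4 * exp ((R / 2) ^ 2)) ≤ hfun k R := by
  have hk' : (1 : ℝ) ≤ k := by exact_mod_cast hk
  have hratio := le_besselI_add_one_div (by positivity : (0 : ℝ) ≤ k + 1 / 2) hR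
  rw [show (k : ℝ) + 1 / 2 + 1 = k + 3 / 2 by ring] at hratio
  have hE := exp_pos ((R / 2) ^ 2)
  calc ((k : ℝ) - 2) / (4 * exp ((R / 2) ^ 2))
      ≤ (((k : ℝ) ^ 2 + k) / 2 - 1) * (1 / (2 * (k + 3 / 2) * exp ((R / 2) ^ 2))) := by
        rw [mul_one_div, div_le_div_iff₀ (by positivity) (by positivity)]
        nlinarith
    _ ≤ hfun k R := by
        unfold hfun
        gcongr
        nlinarith

theorem tendsto_hfun_atTop (hR : 0 < R) : Tendsto (fun k ↦ hfun k R) atTop atTop := by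
  have hlin : Tendsto (fun k : ℕ ↦ ((k : ℝ) - 2) / (4 * exp ((R / 2) ^ 2))) atTop atTop :=
    (tendsto_atTop_add_const_right _ _ tendsto_natCast_atTop_atTop).atTop_div_const
      (by positivity)
  exact tendsto_atTop_mono' _ ((eventually_ge_atTop 1).mono fun k hk ↦ le_hfun hR hk) hlin

theorem exists_abs_jfun_le (hR : 0 < R) : ∃ M, ∀ k, |jfun k R| ≤ M := by
  set B := besselI (3 / 2) R / besselI (1 / 2) R
  have hB : 0 ≤ B := (div_pos (besselI_pos (by norm_num) hR) (besselI_pos (by norm_num) hR)).le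
  refine ⟨|1 - 3 * B / R| + B * (R / 3), fun k ↦ ?_⟩
  set q := besselI ((k : ℝ) + 3 / 2) R / besselI ((k : ℝ) + 1 / 2) R
  have hm : (0 : ℝ) ≤ k + 1 / 2 := by positivity
  have hq : q ≤ R / 3 := by
    have h := besselI_add_one_div_le hm hR
    rw [show (k : ℝ) + 1 / 2 + 1 = k + 3 / 2 by ring] at h
    refine h.trans (div_le_div_of_nonneg_left hR.le (by norm_num) ?_)
    linarith
  have hq₀ : 0 ≤ q := (div_pos (besselI_pos (by positivity) hR) (besselI_pos hm hR)).le
  have hj : jfun k R = (1 - 3 * B / R) - B * q := by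
    unfold jfun
    ring
  calc |jfun k R| ≤ |1 - 3 * B / R| + |B * q| := hj ▸ abs_sub _ _
    _ ≤ |1 - 3 * B / R| + B * (R / 3) := by
        rw [abs_of_nonneg (mul_nonneg hB hq₀)]
        gcongr

end

/-- `Λ_k(γ) → +∞` as `k → ∞`. -/
theorem stmt10 (μ σb R γ : ℝ) (hμ : 0 < μ) (hσb : 0 < σb) (hR : 0 < R) (hγ : 0 < γ) :
    Filter.Tendsto (fun k : ℕ => Lam μ σb R γ k) Filter.atTop Filter.atTop := by
  obtain ⟨M, hM⟩ := exists_abs_jfun_le hR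
  have hLam : ∀ k, Lam μ σb R γ k = μ * σb / R * ((γ - R) * jfun k R + γ * hfun k R) := by
    intro k; unfold Lam; ring
  have hbdd : ∀ k, -(|γ - R| * M) ≤ (γ - R) * jfun k R := fun k ↦
    neg_le_of_abs_le <| (abs_mul _ _).trans_le <| mul_le_mul_of_nonneg_left (hM k) (abs_nonneg _)
  simp_rw [hLam]
  exact (tendsto_atTop_add_left_of_le _ _ hbdd
    ((tendsto_hfun_atTop hR).const_mul_atTop hγ)).const_mul_atTop (by positivity)
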